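/- Let n ≥ 2, let d ≥ 1, and let e : Fin n → EuclideanSpace ℝ (Fin d) be a closed equilateral polygon of length 2, i.e. ∑ j, e j = 0 and ‖e j‖ = 2/n for every j. For a permutation σ of Fin n define the n vertices v_0 = 0 and v_m = ∑_{j=0}^{m-1} e(σ j) for 1 ≤ m ≤ n−1, and define Gyradius(σ) = (1/(2n²)) · ∑_{i=0}^{n-1} ∑_{j=0}^{n-1} ‖v_i − v_j‖². Then the average over all n! permutations satisfies (1/n!) · ∑_{σ ∈ Perm(Fin n)} Gyradius(σ) = (n+1)/(3n²). -/

import Mathlib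

/-!
Write `v σ i - v σ j = ∑ m, c m • e (σ m)` with `c = 𝟙[0,i) - 𝟙[0,j)`. Averaging `‖·‖²` over `σ`
only involves the averaged Gram matrix `∑ σ, ⟪e (σ a), e (σ b)⟫`. Its diagonal is `n! r²`, its
off-diagonal entries agree because permutations act transitively on pairs of distinct points, and
its rows sum to zero because the polygon closes; so `(n - 1)` times it is `n! r² (n δ_ab - 1)` and
`(n - 1) ∑ σ, ‖∑ m, c m • e (σ m)‖² = n! r² (n ∑ c² - (∑ c)²)`. Here `∑ c = i - j` and
`∑ c² = |i - j|`, and summing `n |i - j| - (i - j)²` over `i, j < n` gives `n² (n² - 1) / 6`.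
-/

open Finset Equiv Fintype
open scoped InnerProductSpace

section PermAverage

variable {ι : Type*} [Fintype ι] [DecidableEq ι]

theorem Equiv.Perm.sum_comp_apply_apply_of_ne {M : Type*} [AddCommMonoid M] (f : ι → ι → M)
    {a b c d : ι} (hab : a ≠ b) (hcd : c ≠ d) :
    ∑ σ : Perm ι, f (σ a) (σ b) = ∑ σ : Perm ι, f (σ c) (σ d) := by
  obtain ⟨τ, hτ⟩ := exists_extending_pair ![c, d] ![a, b]
    (by intro i j; fin_cases i <;> fin_cases j <;> simp [hcd, hcd.symm])
    (by intro i j; fin_cases i <;> fin_cases j <;> simp [hab, hab.symm])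
  have hc : τ c = a := hτ 0
  have hd : τ d = b := hτ 1
  calc ∑ σ : Perm ι, f (σ a) (σ b) = ∑ σ : Perm ι, f ((σ * τ) c) ((σ * τ) d) := by
        simp only [Perm.mul_apply, hc, hd]
    _ = _ := Equiv.sum_comp (Equiv.mulRight τ) (fun σ => f (σ c) (σ d))

variable {E : Type*} [NormedAddCommGroup E] [InnerProductSpace ℝ E] {e : ι → E} {r : ℝ}

theorem card_sub_one_mul_sum_perm_inner (hsum : ∑ j, e j = 0) (hnorm : ∀ j, ‖e j‖ = r)
    (a b : ι) :
    ((card ι : ℝ) - 1) * ∑ σ : Perm ι, ⟪e (σ a), e (σ b)⟫_ℝ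
      = (card ι).factorial * r ^ 2 * (card ι * (if a = b then 1 else 0) - 1) := by
  have hdiag : ∀ a, ∑ σ : Perm ι, ⟪e (σ a), e (σ a)⟫_ℝ = (card ι).factorial * r ^ 2 := by
    simp [hnorm, Fintype.card_perm]
  rcases eq_or_ne a b with rfl | hab
  · rw [hdiag, if_pos rfl, mul_one, mul_comm]
  set A : ι → ℝ := fun x => ∑ σ : Perm ι, ⟪e (σ a), e (σ x)⟫_ℝ
  have hrow : ∑ x, A x = 0 := by
    rw [sum_comm]
    simp [← inner_sum, Equiv.sum_comp, hsum]
  have hoff : ∀ x, A x = A b + if x = a then (card ι).factorial * r ^ 2 - A b else 0 := by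
    intro x
    rcases eq_or_ne x a with rfl | hxa
    · simp [A, hdiag]
    · simp only [hxa, if_false, add_zero, A]
      exact Perm.sum_comp_apply_apply_of_ne (fun y z => ⟪e y, e z⟫_ℝ) hxa.symm hab
  rw [sum_congr rfl fun x _ => hoff x, sum_add_distrib, sum_const, Fintype.sum_ite_eq'] at hrow
  simp only [card_univ, nsmul_eq_mul] at hrow
  simp only [hab, if_false]
  linear_combination hrow

theorem card_sub_one_mul_sum_perm_norm_sum_smul_sq (hsum : ∑ j, e j = 0)
    (hnorm : ∀ j, ‖e j‖ = r) (c : ι → ℝ) :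
    ((card ι : ℝ) - 1) * ∑ σ : Perm ι, ‖∑ m, c m • e (σ m)‖ ^ 2
      = (card ι).factorial * r ^ 2 * (card ι * ∑ m, c m ^ 2 - (∑ m, c m) ^ 2) := by
  have hexpand : ∀ σ : Perm ι, ‖∑ m, c m • e (σ m)‖ ^ 2
      = ∑ m, ∑ m', c m * c m' * ⟪e (σ m), e (σ m')⟫_ℝ := by
    intro σ
    rw [← real_inner_self_eq_norm_sq, sum_inner]
    simp only [inner_sum, real_inner_smul_left, real_inner_smul_right]
    exact sum_congr rfl fun m _ => sum_congr rfl fun m' _ => by ring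
  calc ((card ι : ℝ) - 1) * ∑ σ : Perm ι, ‖∑ m, c m • e (σ m)‖ ^ 2
      = ∑ m, ∑ m', c m * c m' * (((card ι : ℝ) - 1) * ∑ σ : Perm ι, ⟪e (σ m), e (σ m')⟫_ℝ) := by
        simp only [hexpand, mul_sum]
        rw [sum_comm]
        refine sum_congr rfl fun m _ => ?_
        rw [sum_comm]
        refine sum_congr rfl fun m' _ => sum_congr rfl fun σ _ => by ring
    _ = ∑ m, ∑ m', c m * c m' *
          ((card ι).factorial * r ^ 2 * (card ι * (if m = m' then 1 else 0) - 1)) := by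
        simp only [card_sub_one_mul_sum_perm_inner hsum hnorm]
    _ = _ := by
        simp only [mul_sub, mul_ite, mul_one, mul_zero, sum_sub_distrib, Fintype.sum_ite_eq,
          ← sum_mul, ← mul_sum, sq]
        ring

end PermAverage

section RangeSums

theorem Fin.sum_univ_sum_univ_eq_sum_range_sum_range {M : Type*} [AddCommMonoid M]
    (f : ℕ → ℕ → M) (n : ℕ) :
    ∑ i : Fin n, ∑ j : Fin n, f i j = ∑ i ∈ range n, ∑ j ∈ range n, f i j := by
  rw [Fin.sum_univ_eq_sum_range (fun i => ∑ j : Fin n, f i j)]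
  exact sum_congr rfl fun i _ => Fin.sum_univ_eq_sum_range (f i) n

theorem sum_range_cast_id (n : ℕ) : ∑ i ∈ range n, (i : ℝ) = n * (n - 1) / 2 := by
  induction n with
  | zero => simp
  | succ n ih => rw [sum_range_succ, ih]; push_cast; ring

theorem sum_range_cast_sq (n : ℕ) :
    ∑ i ∈ range n, (i : ℝ) ^ 2 = n * (n - 1) * (2 * n - 1) / 6 := by
  induction n with
  | zero => simp
  | succ n ih => rw [sum_range_succ, ih]; push_cast; ring

theorem sum_range_succ_sum_range_succ {M : Type*} [AddCommMonoid M] (f : ℕ → ℕ → M) (n : ℕ) :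
    ∑ i ∈ range (n + 1), ∑ j ∈ range (n + 1), f i j
      = ∑ i ∈ range n, ∑ j ∈ range n, f i j + ∑ i ∈ range n, (f i n + f n i) + f n n := by
  simp only [sum_range_succ, sum_add_distrib]
  abel

theorem sum_range_sum_range_abs_sub (n : ℕ) :
    ∑ i ∈ range n, ∑ j ∈ range n, |(i : ℝ) - j| = n * (n ^ 2 - 1) / 3 := by
  induction n with
  | zero => simp
  | succ n ih =>
    have hedge : ∀ i ∈ range n, |(i : ℝ) - n| + |(n : ℝ) - i| = 2 * n - 2 * i := fun i hi => by
      have : (i : ℝ) ≤ n := by exact_mod_cast (mem_range.mp hi).le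
      rw [abs_sub_comm, abs_of_nonneg (sub_nonneg.mpr this)]
      ring
    rw [sum_range_succ_sum_range_succ, ih, sum_congr rfl hedge, sum_sub_distrib, sum_const,
      card_range, nsmul_eq_mul, ← mul_sum, sum_range_cast_id, sub_self, abs_zero]
    push_cast
    ring

theorem sum_range_sum_range_sub_sq (n : ℕ) :
    ∑ i ∈ range n, ∑ j ∈ range n, ((i : ℝ) - j) ^ 2 = n ^ 2 * (n ^ 2 - 1) / 6 := by
  simp only [sub_sq, sum_add_distrib, sum_sub_distrib, sum_const, card_range, nsmul_eq_mul,
    ← mul_sum, ← sum_mul, mul_assoc, sum_range_cast_id, sum_range_cast_sq]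
  ring

end RangeSums

section PrefixSums

variable {n : ℕ}

theorem sum_ite_sub_sum_ite {ι M : Type*} [Fintype ι] [AddCommGroup M] [Module ℝ M]
    (p q : ι → Prop) [DecidablePred p] [DecidablePred q] (x : ι → M) :
    (∑ m, if p m then x m else 0) - ∑ m, (if q m then x m else 0)
      = ∑ m, ((if p m then 1 else 0) - (if q m then 1 else 0) : ℝ) • x m := by
  rw [← sum_sub_distrib]
  refine sum_congr rfl fun m _ => ?_
  split_ifs <;> simp

theorem Fin.sum_ite_val_lt {k : ℕ} (hk : k ≤ n) :
    ∑ m : Fin n, (if (m : ℕ) < k then (1 : ℝ) else 0) = k := by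
  rw [sum_boole, Fin.card_filter_val_lt, min_eq_right hk]

theorem Fin.sum_ite_val_lt_sub_ite_val_lt {i j : ℕ} (hi : i ≤ n) (hj : j ≤ n) :
    ∑ m : Fin n, ((if (m : ℕ) < i then 1 else 0) - (if (m : ℕ) < j then 1 else 0) : ℝ)
      = (i : ℝ) - j := by
  rw [sum_sub_distrib, Fin.sum_ite_val_lt hi, Fin.sum_ite_val_lt hj]

theorem Fin.sum_sq_ite_val_lt_sub_ite_val_lt {i j : ℕ} (hi : i ≤ n) (hj : j ≤ n) :
    ∑ m : Fin n, ((if (m : ℕ) < i then 1 else 0) - (if (m : ℕ) < j then 1 else 0) : ℝ) ^ 2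
      = |(i : ℝ) - j| := by
  have hpoint : ∀ m : Fin n,
      ((if (m : ℕ) < i then 1 else 0) - (if (m : ℕ) < j then 1 else 0) : ℝ) ^ 2
        = (if (m : ℕ) < max i j then 1 else 0) - (if (m : ℕ) < min i j then 1 else 0) := by
    intro m
    simp only [lt_max_iff, lt_min_iff]
    split_ifs <;> first | omega | norm_num
  rw [sum_congr rfl fun m _ => hpoint m, sum_sub_distrib, Fin.sum_ite_val_lt (max_le hi hj),
    Fin.sum_ite_val_lt (min_le_of_left_le hi), Nat.cast_max, Nat.cast_min, max_sub_min_eq_abs']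

end PrefixSums

theorem sGyradius_closed_equilateral_general (n d : ℕ) (hn : 2 ≤ n)
    (e : Fin n → EuclideanSpace ℝ (Fin d))
    (hclosed : ∑ j, e j = 0) (hequi : ∀ j, ‖e j‖ = 2 / n) :
    (1 / (n.factorial : ℝ)) *
        ∑ σ : Equiv.Perm (Fin n),
          (1 / (2 * (n : ℝ) ^ 2)) *
            ∑ i : Fin n, ∑ j : Fin n,
              ‖(∑ m : Fin n, if (m : ℕ) < (i : ℕ) then e (σ m) else 0)
                - (∑ m : Fin n, if (m : ℕ) < (j : ℕ) then e (σ m) else 0)‖ ^ 2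
      = ((n : ℝ) + 1) / (3 * (n : ℝ) ^ 2) := by
  have hn' : (2 : ℝ) ≤ n := by exact_mod_cast hn
  have hn0 : (n : ℝ) ≠ 0 := by linarith
  have hn1 : (n : ℝ) - 1 ≠ 0 := by linarith
  have hpair : ∀ i j : Fin n, ∑ σ : Perm (Fin n),
      ‖(∑ m : Fin n, if (m : ℕ) < (i : ℕ) then e (σ m) else 0)
        - (∑ m : Fin n, if (m : ℕ) < (j : ℕ) then e (σ m) else 0)‖ ^ 2
      = n.factorial * (2 / n) ^ 2 / (n - 1) * (n * |(i : ℝ) - j| - ((i : ℝ) - j) ^ 2) := by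
    intro i j
    have key := card_sub_one_mul_sum_perm_norm_sum_smul_sq hclosed hequi
      (fun m => (if (m : ℕ) < i then 1 else 0) - (if (m : ℕ) < j then 1 else 0))
    rw [Fintype.card_fin, Fin.sum_sq_ite_val_lt_sub_ite_val_lt i.isLt.le j.isLt.le,
      Fin.sum_ite_val_lt_sub_ite_val_lt i.isLt.le j.isLt.le] at key
    simp only [sum_ite_sub_sum_ite]
    rw [div_mul_eq_mul_div, eq_div_iff hn1]
    linear_combination key
  simp only [← mul_sum]
  rw [sum_comm]
  simp only [sum_comm (s := univ (α := Perm (Fin n))), hpair, ← mul_sum]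
  rw [Fin.sum_univ_sum_univ_eq_sum_range_sum_range
    (fun i j => (n : ℝ) * |(i : ℝ) - j| - ((i : ℝ) - j) ^ 2)]
  simp only [sum_sub_distrib, ← mul_sum]
  rw [sum_range_sum_range_abs_sub, sum_range_sum_range_sub_sq]
  field_simp
  ring

/-- For a closed equilateral polygon of length 2 (edges of length `2/n` summing to zero), the
average over all rearrangements of the radius of gyration (with `n` vertices given by the
partial sums starting at the origin) is `(n+1)/(3n²)`. -/
theorem sGyradius_closed_equilateral (n d : ℕ) (hn : 2 ≤ n) (hd : 1 ≤ d)
    (e : Fin n → EuclideanSpace ℝ (Fin d))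
    (hclosed : ∑ j, e j = 0) (hequi : ∀ j, ‖e j‖ = 2 / n) :
    (1 / (n.factorial : ℝ)) *
        ∑ σ : Equiv.Perm (Fin n),
          (1 / (2 * (n : ℝ) ^ 2)) *
            ∑ i : Fin n, ∑ j : Fin n,
              ‖(∑ m : Fin n, if (m : ℕ) < (i : ℕ) then e (σ m) else 0)
                - (∑ m : Fin n, if (m : ℕ) < (j : ℕ) then e (σ m) else 0)‖ ^ 2
      = ((n : ℝ) + 1) / (3 * (n : ℝ) ^ 2) :=
  sGyradius_closed_equilateral_general n d hn e hclosed hequi
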